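/- Let Φ(x,y) = Σₙ φₙ(x)ψₙ(y) where φₙ, ψₙ : ℝ → ℂ satisfy Σₙ |φₙ|² ≤ C₁ and Σₙ |ψₙ|² ≤ C₂ pointwise. Then for any matrix A = (a(x,y)) indexed by countable subsets S ⊆ ℝ, T ⊆ ℝ that induces a bounded operator ℓ²(T) → ℓ²(S) of norm ‖A‖, the Schur product matrix (Φ(s,t)·a(s,t)) induces a bounded operator ℓ²(T) → ℓ²(S) of norm at most √(C₁C₂)·‖A‖. -/

import Mathlib

/-!
The Schur product factors through the rank-one pieces of `Φ`: for `f ∈ ℓ²(T)`,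
`(Φ ⋆ A) f (s) = ∑ₙ φₙ(s) · (A (ψₙ f))(s)`. Cauchy–Schwarz in `n` gives
`|(Φ ⋆ A) f (s)|² ≤ C₁ ∑ₙ |A (ψₙ f)(s)|²`, and summing over `s`,
`‖(Φ ⋆ A) f‖² ≤ C₁ ∑ₙ ‖A (ψₙ f)‖² ≤ C₁ ‖A‖² ∑ₙ ‖ψₙ f‖² ≤ C₁ C₂ ‖A‖² ‖f‖²`.
The interchange of the sums over `n` and `t` is absolutely convergent because every row of the
matrix of `A` is square-summable, being the conjugate of `A† eₛ`.
-/

open scoped lp ComplexConjugate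

section

variable {ι ν E : Type*} [NormedAddCommGroup E]

theorem memℓp_two_iff {f : ι → E} : Memℓp f 2 ↔ Summable fun i => ‖f i‖ ^ 2 := by
  simp [memℓp_gen_iff (p := 2) (by norm_num)]

theorem lp.summable_norm_sq (f : ℓ²(ι, E)) : Summable fun i => ‖f i‖ ^ 2 :=
  memℓp_two_iff.1 f.2

theorem lp.norm_sq_eq_tsum (f : ℓ²(ι, E)) : ‖f‖ ^ 2 = ∑' i, ‖f i‖ ^ 2 := by
  simpa using lp.norm_rpow_eq_tsum (p := 2) (by norm_num) f

theorem lp.summable_and_hasSum_tsum_norm_sq_apply {X : ν → ℓ²(ι, E)}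
    (hX : Summable fun n => ‖X n‖ ^ 2) :
    (∀ i, Summable fun n => ‖X n i‖ ^ 2) ∧
      HasSum (fun i => ∑' n, ‖X n i‖ ^ 2) (∑' n, ‖X n‖ ^ 2) := by
  have hsum : Summable (Function.uncurry fun n i => ‖X n i‖ ^ 2) :=
    (summable_prod_of_nonneg fun _ => sq_nonneg _).2
      ⟨fun n => lp.summable_norm_sq (X n), by simpa only [← lp.norm_sq_eq_tsum] using hX⟩
  refine ⟨hsum.prod_symm.prod_factor, ?_⟩
  have hcomm : ∑' n, ‖X n‖ ^ 2 = ∑' i, ∑' n, ‖X n i‖ ^ 2 := by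
    simp only [lp.norm_sq_eq_tsum]
    exact hsum.tsum_comm.symm
  rw [hcomm]
  exact hsum.prod_symm.prod.hasSum

end

theorem Real.summable_mul_and_tsum_le_sqrt_mul_sqrt {β : Type*} {u v : β → ℝ}
    (hu0 : ∀ b, 0 ≤ u b) (hv0 : ∀ b, 0 ≤ v b)
    (hu : Summable fun b => u b ^ 2) (hv : Summable fun b => v b ^ 2) :
    (Summable fun b => u b * v b) ∧
      ∑' b, u b * v b ≤ √(∑' b, u b ^ 2) * √(∑' b, v b ^ 2) := by
  have := Real.summable_and_inner_le_Lp_mul_Lq_tsum_of_nonneg .two_two hu0 hv0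
    (by simpa using hu) (by simpa using hv)
  simpa [Real.sqrt_eq_rpow] using this

section

variable {𝕜 : Type*} [RCLike 𝕜] {ι κ ν : Type*}

theorem summable_norm_sq_row_of_apply_eq_tsum {a : ι → κ → 𝕜} (A : ℓ²(κ, 𝕜) →L[𝕜] ℓ²(ι, 𝕜))
    (hA : ∀ f i, A f i = ∑' j, a i j * f j) (i : ι) :
    Summable fun j => ‖a i j‖ ^ 2 := by
  classical
  have hrow : ∀ j, (A.adjoint (lp.single 2 i 1)) j = conj (a i j) := by
    intro j
    have : A (lp.single 2 j 1) i = a i j := by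
      rw [hA, tsum_eq_single j fun j' hj' => by simp [hj']]
      simp
    rw [← this]
    simpa [lp.inner_single_left, lp.inner_single_right] using
      ContinuousLinearMap.adjoint_inner_right A (lp.single 2 j (1 : 𝕜)) (lp.single 2 i 1)
  simpa [hrow] using lp.summable_norm_sq (A.adjoint (lp.single 2 i 1))

theorem norm_tsum_mul_sq_le {β : Type*} {x y : β → 𝕜} {C : ℝ}
    (hx : Summable fun b => ‖x b‖ ^ 2) (hxC : ∑' b, ‖x b‖ ^ 2 ≤ C)
    (hy : Summable fun b => ‖y b‖ ^ 2) :
    ‖∑' b, x b * y b‖ ^ 2 ≤ C * ∑' b, ‖y b‖ ^ 2 := by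
  obtain ⟨hxy, hle⟩ := Real.summable_mul_and_tsum_le_sqrt_mul_sqrt
    (fun b => norm_nonneg (x b)) (fun b => norm_nonneg (y b)) hx hy
  have hnorm : ‖∑' b, x b * y b‖ ≤ √C * √(∑' b, ‖y b‖ ^ 2) := calc
    ‖∑' b, x b * y b‖ ≤ ∑' b, ‖x b‖ * ‖y b‖ := by
      simpa only [norm_mul] using
        norm_tsum_le_tsum_norm (f := fun b => x b * y b) (by simpa only [norm_mul] using hxy)
    _ ≤ √(∑' b, ‖x b‖ ^ 2) * √(∑' b, ‖y b‖ ^ 2) := hle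
    _ ≤ √C * √(∑' b, ‖y b‖ ^ 2) := by gcongr
  have hC : 0 ≤ C := (tsum_nonneg fun b => sq_nonneg ‖x b‖).trans hxC
  calc ‖∑' b, x b * y b‖ ^ 2 ≤ (√C * √(∑' b, ‖y b‖ ^ 2)) ^ 2 := by gcongr
    _ = C * ∑' b, ‖y b‖ ^ 2 := by
      rw [mul_pow, Real.sq_sqrt hC, Real.sq_sqrt (tsum_nonneg fun b => sq_nonneg _)]

theorem exists_lp_mul_tsum_norm_sq_le {ψ : ν → κ → 𝕜} {C : ℝ}
    (hψs : ∀ j, Summable fun n => ‖ψ n j‖ ^ 2) (hψ : ∀ j, ∑' n, ‖ψ n j‖ ^ 2 ≤ C)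
    (f : ℓ²(κ, 𝕜)) :
    ∃ g : ν → ℓ²(κ, 𝕜), (∀ n j, g n j = ψ n j * f j) ∧
      Summable (fun n => ‖g n‖ ^ 2) ∧ ∑' n, ‖g n‖ ^ 2 ≤ C * ‖f‖ ^ 2 := by
  have hF : ∀ j n, ‖ψ n j * f j‖ ^ 2 = ‖ψ n j‖ ^ 2 * ‖f j‖ ^ 2 := fun j n => by
    rw [norm_mul, mul_pow]
  have hfibsum : ∀ j, ∑' n, ‖ψ n j * f j‖ ^ 2 ≤ C * ‖f j‖ ^ 2 := fun j => by
    simp only [hF, tsum_mul_right]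
    exact mul_le_mul_of_nonneg_right (hψ j) (sq_nonneg _)
  have hsum : Summable (Function.uncurry fun j n => ‖ψ n j * f j‖ ^ 2) :=
    (summable_prod_of_nonneg fun _ => sq_nonneg _).2
      ⟨fun j => by simpa only [hF] using (hψs j).mul_right (‖f j‖ ^ 2),
        .of_nonneg_of_le (fun j => tsum_nonneg fun n => sq_nonneg _) hfibsum
          ((lp.summable_norm_sq f).mul_left C)⟩
  have hmem : ∀ n, Memℓp (fun j => ψ n j * f j) 2 := fun n =>
    memℓp_two_iff.2 (hsum.prod_symm.prod_factor n)
  let g : ν → ℓ²(κ, 𝕜) := fun n => ⟨_, hmem n⟩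
  have hg : ∀ n, ‖g n‖ ^ 2 = ∑' j, ‖ψ n j * f j‖ ^ 2 := fun n => lp.norm_sq_eq_tsum (g n)
  refine ⟨g, fun _ _ => rfl, ?_, ?_⟩
  · simp only [hg]
    exact hsum.prod_symm.prod
  · calc ∑' n, ‖g n‖ ^ 2 = ∑' j, ∑' n, ‖ψ n j * f j‖ ^ 2 := by
          simp only [hg]
          exact hsum.tsum_comm
      _ ≤ ∑' j, C * ‖f j‖ ^ 2 :=
          hsum.prod.tsum_le_tsum hfibsum ((lp.summable_norm_sq f).mul_left C)
      _ = C * ‖f‖ ^ 2 := by rw [tsum_mul_left, lp.norm_sq_eq_tsum]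

theorem summable_and_tsum_tsum_mul_comm {x : ν → 𝕜} {ψ : ν → κ → 𝕜} {r f : κ → 𝕜}
    {C : ℝ} (hx : Summable fun n => ‖x n‖ ^ 2)
    (hψs : ∀ j, Summable fun n => ‖ψ n j‖ ^ 2) (hψ : ∀ j, ∑' n, ‖ψ n j‖ ^ 2 ≤ C)
    (hr : Summable fun j => ‖r j‖ ^ 2) (hf : Summable fun j => ‖f j‖ ^ 2) :
    (Summable fun j => (∑' n, x n * ψ n j) * r j * f j) ∧
      ∑' j, (∑' n, x n * ψ n j) * r j * f j = ∑' n, x n * ∑' j, r j * (ψ n j * f j) := by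
  set F : κ → ν → 𝕜 := fun j n => x n * ψ n j * (r j * f j)
  have hF : ∀ j n, ‖F j n‖ = ‖x n‖ * ‖ψ n j‖ * (‖r j‖ * ‖f j‖) := fun j n => by
    simp only [F, norm_mul]
  have hxψ : ∀ j, (Summable fun n => ‖x n‖ * ‖ψ n j‖) ∧
      ∑' n, ‖x n‖ * ‖ψ n j‖ ≤ √(∑' n, ‖x n‖ ^ 2) * √C := fun j => by
    obtain ⟨hs, hle⟩ := Real.summable_mul_and_tsum_le_sqrt_mul_sqrt
      (fun n => norm_nonneg (x n)) (fun n => norm_nonneg (ψ n j)) hx (hψs j)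
    exact ⟨hs, hle.trans (by gcongr; exact hψ j)⟩
  have hrf := (Real.summable_mul_and_tsum_le_sqrt_mul_sqrt
    (fun j => norm_nonneg (r j)) (fun j => norm_nonneg (f j)) hr hf).1
  have hsum : Summable (Function.uncurry F) := by
    refine .of_norm ((summable_prod_of_nonneg fun _ => norm_nonneg _).2 ⟨fun j => ?_, ?_⟩)
    · simpa only [Function.uncurry_apply_pair, hF] using (hxψ j).1.mul_right (‖r j‖ * ‖f j‖)
    · refine .of_nonneg_of_le (fun j => tsum_nonneg fun n => norm_nonneg _) (fun j => ?_)
        (hrf.mul_left (√(∑' n, ‖x n‖ ^ 2) * √C))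
      simp only [Function.uncurry_apply_pair, hF, tsum_mul_right]
      exact mul_le_mul_of_nonneg_right (hxψ j).2 (by positivity)
  have hrow : ∀ j, (∑' n, x n * ψ n j) * r j * f j = ∑' n, F j n := fun j => by
    rw [mul_assoc, ← tsum_mul_right]
  refine ⟨by simpa only [hrow, Function.uncurry_apply_pair] using hsum.prod, ?_⟩
  calc ∑' j, (∑' n, x n * ψ n j) * r j * f j = ∑' j, ∑' n, F j n := tsum_congr hrow
    _ = ∑' n, ∑' j, F j n := hsum.tsum_comm.symm
    _ = ∑' n, x n * ∑' j, r j * (ψ n j * f j) := tsum_congr fun n => by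
      rw [← tsum_mul_left]
      exact tsum_congr fun j => by ring

theorem exists_clm_apply_eq_tsum_of_tsum_le {b : ι → κ → 𝕜} {C : ℝ} (hC : 0 ≤ C)
    (hsum : ∀ (f : ℓ²(κ, 𝕜)) i, Summable fun j => b i j * f j)
    (hbound : ∀ f : ℓ²(κ, 𝕜), (Summable fun i => ‖∑' j, b i j * f j‖ ^ 2) ∧
      ∑' i, ‖∑' j, b i j * f j‖ ^ 2 ≤ (C * ‖f‖) ^ 2) :
    ∃ B : ℓ²(κ, 𝕜) →L[𝕜] ℓ²(ι, 𝕜), (∀ f i, B f i = ∑' j, b i j * f j) ∧ ‖B‖ ≤ C := by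
  let L : ℓ²(κ, 𝕜) →ₗ[𝕜] ℓ²(ι, 𝕜) :=
    { toFun := fun f => ⟨fun i => ∑' j, b i j * f j, memℓp_two_iff.2 (hbound f).1⟩
      map_add' := fun f g => by
        ext i
        show ∑' j, b i j * (f + g) j = ∑' j, b i j * f j + ∑' j, b i j * g j
        simp only [lp.coeFn_add, Pi.add_apply, mul_add]
        exact (hsum f i).tsum_add (hsum g i)
      map_smul' := fun c f => by
        ext i
        simp [mul_left_comm _ c, tsum_mul_left] }
  have hL : ∀ f, ‖L f‖ ≤ C * ‖f‖ := fun f => by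
    refine (pow_le_pow_iff_left₀ (norm_nonneg _) (by positivity) two_ne_zero).1 ?_
    rw [lp.norm_sq_eq_tsum]
    exact (hbound f).2
  exact ⟨L.mkContinuous C hL, fun _ _ => rfl, L.mkContinuous_norm_le hC hL⟩

theorem exists_clm_schur_mul_norm_le (φ : ν → ι → 𝕜) (ψ : ν → κ → 𝕜) {C₁ C₂ : ℝ}
    (hC₁ : 0 ≤ C₁) (hC₂ : 0 ≤ C₂)
    (hφs : ∀ i, Summable fun n => ‖φ n i‖ ^ 2) (hφ : ∀ i, ∑' n, ‖φ n i‖ ^ 2 ≤ C₁)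
    (hψs : ∀ j, Summable fun n => ‖ψ n j‖ ^ 2) (hψ : ∀ j, ∑' n, ‖ψ n j‖ ^ 2 ≤ C₂)
    (a : ι → κ → 𝕜) (A : ℓ²(κ, 𝕜) →L[𝕜] ℓ²(ι, 𝕜)) (hA : ∀ f i, A f i = ∑' j, a i j * f j) :
    ∃ B : ℓ²(κ, 𝕜) →L[𝕜] ℓ²(ι, 𝕜),
      (∀ f i, B f i = ∑' j, (∑' n, φ n i * ψ n j) * a i j * f j) ∧
        ‖B‖ ≤ √(C₁ * C₂) * ‖A‖ := by
  have hschur (f : ℓ²(κ, 𝕜)) (i : ι) :=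
    summable_and_tsum_tsum_mul_comm (hφs i) hψs hψ
      (summable_norm_sq_row_of_apply_eq_tsum A hA i) (lp.summable_norm_sq f)
  refine exists_clm_apply_eq_tsum_of_tsum_le (by positivity) (fun f i => (hschur f i).1)
    fun f => ?_
  obtain ⟨g, hg, hgs, hgC⟩ := exists_lp_mul_tsum_norm_sq_le hψs hψ f
  have hAg : ∀ n, ‖A (g n)‖ ^ 2 ≤ ‖A‖ ^ 2 * ‖g n‖ ^ 2 := fun n => by
    rw [← mul_pow]
    exact pow_le_pow_left₀ (norm_nonneg _) (A.le_opNorm _) 2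
  have hAgs : Summable fun n => ‖A (g n)‖ ^ 2 :=
    .of_nonneg_of_le (fun n => sq_nonneg _) hAg (hgs.mul_left _)
  obtain ⟨hAgi, hAgsum⟩ := lp.summable_and_hasSum_tsum_norm_sq_apply hAgs
  have hpt : ∀ i, ‖∑' j, (∑' n, φ n i * ψ n j) * a i j * f j‖ ^ 2 ≤
      C₁ * ∑' n, ‖A (g n) i‖ ^ 2 := fun i => by
    simp only [(hschur f i).2, ← hg, ← hA]
    exact norm_tsum_mul_sq_le (hφs i) (hφ i) (hAgi i)
  have hmaj := hAgsum.summable.mul_left C₁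
  have hsum := Summable.of_nonneg_of_le (fun i => sq_nonneg _) hpt hmaj
  refine ⟨hsum, ?_⟩
  calc ∑' i, ‖∑' j, (∑' n, φ n i * ψ n j) * a i j * f j‖ ^ 2
      ≤ ∑' i, C₁ * ∑' n, ‖A (g n) i‖ ^ 2 := hsum.tsum_le_tsum hpt hmaj
    _ = C₁ * ∑' n, ‖A (g n)‖ ^ 2 := by rw [tsum_mul_left, hAgsum.tsum_eq]
    _ ≤ C₁ * (‖A‖ ^ 2 * (C₂ * ‖f‖ ^ 2)) := by
        gcongr
        calc ∑' n, ‖A (g n)‖ ^ 2 ≤ ∑' n, ‖A‖ ^ 2 * ‖g n‖ ^ 2 :=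
              hAgs.tsum_le_tsum hAg (hgs.mul_left _)
          _ ≤ ‖A‖ ^ 2 * (C₂ * ‖f‖ ^ 2) := by rw [tsum_mul_left]; gcongr
    _ = (√(C₁ * C₂) * ‖A‖ * ‖f‖) ^ 2 := by
        rw [mul_pow, mul_pow, Real.sq_sqrt (mul_nonneg hC₁ hC₂)]
        ring

end

theorem stmt2_general (S T : Set ℝ)
    (φ ψ : ℕ → ℝ → ℂ) (C₁ C₂ : ℝ) (hC₁ : 0 ≤ C₁) (hC₂ : 0 ≤ C₂)
    (hφs : ∀ x : ℝ, Summable fun n => ‖φ n x‖ ^ 2)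
    (hφ : ∀ x : ℝ, ∑' n, ‖φ n x‖ ^ 2 ≤ C₁)
    (hψs : ∀ y : ℝ, Summable fun n => ‖ψ n y‖ ^ 2)
    (hψ : ∀ y : ℝ, ∑' n, ‖ψ n y‖ ^ 2 ≤ C₂)
    (Φ : ℝ → ℝ → ℂ) (hΦ : ∀ x y : ℝ, Φ x y = ∑' n, φ n x * ψ n y)
    (a : S → T → ℂ)
    (A : lp (fun _ : T => ℂ) 2 →L[ℂ] lp (fun _ : S => ℂ) 2)
    (hA : ∀ (f : lp (fun _ : T => ℂ) 2) (s : S), A f s = ∑' t : T, a s t * f t) :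
    ∃ B : lp (fun _ : T => ℂ) 2 →L[ℂ] lp (fun _ : S => ℂ) 2,
      (∀ (f : lp (fun _ : T => ℂ) 2) (s : S),
        B f s = ∑' t : T, Φ (s : ℝ) (t : ℝ) * a s t * f t) ∧
      ‖B‖ ≤ Real.sqrt (C₁ * C₂) * ‖A‖ := by
  obtain ⟨B, hB, hBA⟩ := exists_clm_schur_mul_norm_le (fun n (s : S) => φ n s)
    (fun n (t : T) => ψ n t) hC₁ hC₂ (fun s => hφs s) (fun s => hφ s) (fun t => hψs t)
    (fun t => hψ t) a A hA
  exact ⟨B, fun f s => by simp only [hB, hΦ], hBA⟩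

theorem stmt2 (S T : Set ℝ) (hS : S.Countable) (hT : T.Countable)
    (φ ψ : ℕ → ℝ → ℂ) (C₁ C₂ : ℝ) (hC₁ : 0 ≤ C₁) (hC₂ : 0 ≤ C₂)
    (hφs : ∀ x : ℝ, Summable fun n => ‖φ n x‖ ^ 2)
    (hφ : ∀ x : ℝ, ∑' n, ‖φ n x‖ ^ 2 ≤ C₁)
    (hψs : ∀ y : ℝ, Summable fun n => ‖ψ n y‖ ^ 2)
    (hψ : ∀ y : ℝ, ∑' n, ‖ψ n y‖ ^ 2 ≤ C₂)
    (Φ : ℝ → ℝ → ℂ) (hΦ : ∀ x y : ℝ, Φ x y = ∑' n, φ n x * ψ n y)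
    (a : S → T → ℂ)
    (A : lp (fun _ : T => ℂ) 2 →L[ℂ] lp (fun _ : S => ℂ) 2)
    (hA : ∀ (f : lp (fun _ : T => ℂ) 2) (s : S), A f s = ∑' t : T, a s t * f t) :
    ∃ B : lp (fun _ : T => ℂ) 2 →L[ℂ] lp (fun _ : S => ℂ) 2,
      (∀ (f : lp (fun _ : T => ℂ) 2) (s : S),
        B f s = ∑' t : T, Φ (s : ℝ) (t : ℝ) * a s t * f t) ∧
      ‖B‖ ≤ Real.sqrt (C₁ * C₂) * ‖A‖ :=
  stmt2_general S T φ ψ C₁ C₂ hC₁ hC₂ hφs hφ hψs hψ Φ hΦ a A hA
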